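/- arXiv:2505.07221 — 3 statements merged into one kernel-verified Lean document; each statement's English description precedes it below -/
import Mathlib

section
/- Let k=(k_1,…,k_r) be an admissible index and let l=(k_{r+1},…,k_{r+s}) be a tuple of integers all ≥ 2. For d ∈ {0,…,min(r,s)}, let Σ_{r,s,d} be the set of surjections σ: {1,…,r+s} → {1,…,r+s−d} satisfying σ(1)<σ(2)<⋯<σ(r) and σ(r+1)<σ(r+2)<⋯<σ(r+s), and for σ ∈ Σ_{r,s,d} define k^σ_j = k_a if σ^{−1}({j})={a}, and k^σ_j = k_a+k_b if σ^{−1}({j})={a,b} with a≠b. Then for every positive integer N: ζ^◇_N(k)·ζ_N(l) = Σ_{d=0}^{min(r,s)} Σ_{σ∈Σ_{r,s,d}} ζ^◇_N(k^σ_1,…,k^σ_{r+s−d}). -/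
/-!
Both sides are sums over index sets: `((A, n), m)` on the left (`n` a chain strict outside `A`,
`k = 1` on `A`, `m` a strict chain) and `⟨d, σ, B, p⟩` on the right (`σ` a stuffle, `p` a chain
strict outside `B`, `k^σ = 1` on `B`). Since every `l_b ≥ 2`, the fibre of `σ` over a point of `B`
is a single position `i` of `k`, with `k_i = 1`; so pulling `p` back along `σ` is a
weight-preserving map from right to left, turning `1/(N - p_j)` into `1/(N - n_i)`. Its inverse
merges the values of `n` and `m` in increasing order, identifying `n_i` with an equal `m_b`
exactly when `i ∉ A`.
-/

open scoped Classical

/-- The modified multiple harmonic sum `ζ◇_N(k)` for an index given as a tuple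
`k : Fin r → ℕ` (0-based positions). -/
noncomputable def zdiaF (N : ℕ) {r : ℕ} (k : Fin r → ℕ) : ℚ :=
  ∑ A : Finset (Fin r),
    if ∀ i ∈ A, k i = 1 then
      ∑ n ∈ Finset.univ.filter (fun n : Fin r → Fin N =>
        (∀ i, 0 < (n i : ℕ)) ∧
        ∀ (i : Fin r) (h : (i : ℕ) + 1 < r),
          if i ∈ A then n i ≤ n ⟨(i : ℕ) + 1, h⟩ else n i < n ⟨(i : ℕ) + 1, h⟩),
        ∏ i : Fin r,
          if i ∈ A then (1 : ℚ) / ((N : ℚ) - ((n i : ℕ) : ℚ))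
          else (1 : ℚ) / (((n i : ℕ) : ℚ) ^ k i)
    else 0

/-- The multiple harmonic sum `ζ_N(k) = ∑_{0<n₁<⋯<n_r<N} 1/(n₁^{k₁}⋯n_r^{k_r})`. -/
noncomputable def mhsF (N : ℕ) {r : ℕ} (k : Fin r → ℕ) : ℚ :=
  ∑ n ∈ Finset.univ.filter (fun n : Fin r → Fin N =>
      (∀ i, 0 < (n i : ℕ)) ∧ StrictMono n),
    ∏ i : Fin r, (1 : ℚ) / (((n i : ℕ) : ℚ) ^ k i)

open Finset

def MonotoneWithTiesIn {ι α : Type*} [Preorder ι] [Preorder α] (A : Set ι) (f : ι → α) : Prop :=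
  Monotone f ∧ ∀ ⦃i j⦄, i < j → f i = f j → i ∈ A

namespace MonotoneWithTiesIn

variable {ι κ α : Type*} [PartialOrder ι] [Preorder κ] [PartialOrder α] {A : Set ι} {f : ι → α}

lemma lt_of_notMem (h : MonotoneWithTiesIn A f) {i j : ι} (hij : i < j) (hi : i ∉ A) :
    f i < f j :=
  (h.1 hij.le).lt_of_ne fun he => hi (h.2 hij he)

lemma comp {B : Set κ} {g : κ → α} (h : MonotoneWithTiesIn B g) {e : ι → κ} (he : StrictMono e) :
    MonotoneWithTiesIn (e ⁻¹' B) (g ∘ e) :=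
  ⟨h.1.comp he.monotone, fun _ _ hij hg => h.2 (he hij) hg⟩

end MonotoneWithTiesIn

lemma Fin.step_iff_monotoneWithTiesIn {α : Type*} [LinearOrder α] {t : ℕ} {A : Finset (Fin t)}
    {f : Fin t → α} :
    (∀ (i : Fin t) (h : (i : ℕ) + 1 < t),
        if i ∈ A then f i ≤ f ⟨(i : ℕ) + 1, h⟩ else f i < f ⟨(i : ℕ) + 1, h⟩) ↔
      MonotoneWithTiesIn ↑A f := by
  constructor
  · intro h
    have hle : ∀ (i : Fin t) (hi : (i : ℕ) + 1 < t), f i ≤ f ⟨(i : ℕ) + 1, hi⟩ := by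
      intro i hi
      have := h i hi
      split_ifs at this
      exacts [this, this.le]
    have hmono : Monotone f := by
      cases t with
      | zero => exact fun i => i.elim0
      | succ t => exact Fin.monotone_iff_le_succ.2 fun i => hle i.castSucc (by simp)
    refine ⟨hmono, fun i j hij hf => by_contra fun hi => ?_⟩
    have hi1 : (i : ℕ) + 1 < t := by omega
    have := h i hi1
    rw [if_neg (show i ∉ A from hi)] at this
    exact (this.trans_le (hmono (Fin.mk_le_of_le_val hij))).ne hf
  · intro h i hi
    split_ifs with hiA
    · exact h.1 (Fin.mk_le_of_le_val (by simp))
    · exact h.lt_of_notMem (Fin.mk_lt_of_lt_val (by simp)) hiA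

section Rank

variable {ι β : Type*} [Fintype ι] [LinearOrder β] {c : ℕ}

noncomputable def rankOf (key : ι → β) (h : #(univ.image key) = c) (a : ι) : Fin c :=
  ((univ.image key).orderIsoOfFin h).symm ⟨key a, mem_image_of_mem key (mem_univ a)⟩

variable {key : ι → β} (h : #(univ.image key) = c)

@[simp]
lemma orderEmbOfFin_rankOf (a : ι) : (univ.image key).orderEmbOfFin h (rankOf key h a) = key a := by
  rw [← coe_orderIsoOfFin_apply, rankOf, OrderIso.apply_symm_apply]

lemma rankOf_lt_rankOf_iff {a a' : ι} : rankOf key h a < rankOf key h a' ↔ key a < key a' := by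
  rw [← (univ.image key).orderEmbOfFin h |>.lt_iff_lt, orderEmbOfFin_rankOf, orderEmbOfFin_rankOf]

lemma rankOf_eq_rankOf_iff {a a' : ι} : rankOf key h a = rankOf key h a' ↔ key a = key a' := by
  rw [← (univ.image key).orderEmbOfFin h |>.injective.eq_iff, orderEmbOfFin_rankOf,
    orderEmbOfFin_rankOf]

lemma rankOf_surjective : Function.Surjective (rankOf key h) := by
  intro j
  obtain ⟨a, -, ha⟩ := mem_image.1 ((univ.image key).orderEmbOfFin_mem h j)
  refine ⟨a, (univ.image key).orderEmbOfFin h |>.injective ?_⟩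
  rw [orderEmbOfFin_rankOf, ha]

lemma exists_rankOf_eq {τ : ι → Fin c} (hτ : Function.Surjective τ)
    (h_eq : ∀ a a', τ a = τ a' → key a = key a') (h_lt : ∀ a a', τ a < τ a' → key a < key a') :
    ∃ h : #(univ.image key) = c, rankOf key h = τ := by
  set κ : Fin c → β := fun j => key (Function.surjInv hτ j)
  have hκτ : ∀ a, κ (τ a) = key a := fun a => h_eq _ _ (Function.surjInv_eq hτ (τ a))
  have hκ : StrictMono κ := fun j j' hj =>
    h_lt _ _ (by rwa [Function.surjInv_eq hτ, Function.surjInv_eq hτ])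
  have himage : univ.image key = univ.image κ := by
    ext x
    simp only [mem_image, mem_univ, true_and]
    exact ⟨fun ⟨a, ha⟩ => ⟨τ a, (hκτ a).trans ha⟩, fun ⟨j, hj⟩ => ⟨_, hj⟩⟩
  have hcard : #(univ.image key) = c := by
    rw [himage, card_image_of_injective _ hκ.injective, card_univ, Fintype.card_fin]
  have hκ_eq : κ = (univ.image key).orderEmbOfFin hcard :=
    orderEmbOfFin_unique hcard (fun j => himage ▸ mem_image_of_mem κ (mem_univ j)) hκ
  refine ⟨hcard, funext fun a => (univ.image key).orderEmbOfFin hcard |>.injective ?_⟩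
  rw [orderEmbOfFin_rankOf, ← hκ_eq, hκτ]

end Rank

section Stuffle

variable {α : Type*} {r s : ℕ}

def IsStuffle (r s : ℕ) {c : ℕ} (σ : Fin (r + s) → Fin c) : Prop :=
  Function.Surjective σ ∧ StrictMono (σ ∘ Fin.castAdd s) ∧ StrictMono (σ ∘ Fin.natAdd r)

abbrev ProdTerm (α : Type*) (r s : ℕ) := (Finset (Fin r) × (Fin r → α)) × (Fin s → α)

abbrev StuffleTerm (α : Type*) (r s : ℕ) :=
  Σ d : ℕ, (Fin (r + s) → Fin (r + s - d)) × (Finset (Fin (r + s - d)) × (Fin (r + s - d) → α))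

def StuffleTerm.split (z : StuffleTerm α r s) : ProdTerm α r s :=
  ((univ.filter fun i => z.2.1 (Fin.castAdd s i) ∈ z.2.2.1, z.2.2.2 ∘ z.2.1 ∘ Fin.castAdd s),
    z.2.2.2 ∘ z.2.1 ∘ Fin.natAdd r)

lemma exists_eq_castAdd_of_apply_mem {c : ℕ} {σ : Fin (r + s) → Fin c} {B : Finset (Fin c)}
    (hB : ∀ b, σ (Fin.natAdd r b) ∉ B) {a : Fin (r + s)} (ha : σ a ∈ B) :
    ∃ i, a = Fin.castAdd s i := by
  induction a using Fin.addCases with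
  | left i => exact ⟨i, rfl⟩
  | right b => exact absurd ha (hB b)

lemma eq_of_apply_eq_of_apply_mem {c : ℕ} {σ : Fin (r + s) → Fin c} {B : Finset (Fin c)}
    (hσ : StrictMono (σ ∘ Fin.castAdd s)) (hB : ∀ b, σ (Fin.natAdd r b) ∉ B)
    {a a' : Fin (r + s)} (ha : σ a ∈ B) (he : σ a = σ a') : a = a' := by
  obtain ⟨i, rfl⟩ := exists_eq_castAdd_of_apply_mem hB ha
  obtain ⟨i', rfl⟩ := exists_eq_castAdd_of_apply_mem hB (he ▸ ha)
  rw [hσ.injective he]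

namespace ProdTerm

def tag (x : ProdTerm α r s) : Fin (r + s) → ℕ :=
  Fin.append (fun i => if i ∈ x.1.1 then (i : ℕ) else r) fun _ => r

/-- Ranking positions by `key` merges the two chains: among equal values come first the positions
of `A` in order, then, tied and hence merged, the last entry of `n` and the entry of `m`. -/
def key (x : ProdTerm α r s) (a : Fin (r + s)) : α ×ₗ ℕ :=
  toLex (Fin.append x.1.2 x.2 a, x.tag a)

lemma tag_le (x : ProdTerm α r s) (a : Fin (r + s)) : x.tag a ≤ r := by
  induction a using Fin.addCases with
  | left i => simp only [tag, Fin.append_left]; split_ifs <;> omega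
  | right b => simp [tag]

lemma exists_mem_of_tag_lt {x : ProdTerm α r s} {a : Fin (r + s)} (ha : x.tag a < r) :
    ∃ i ∈ x.1.1, a = Fin.castAdd s i := by
  induction a using Fin.addCases with
  | left i =>
    simp only [tag, Fin.append_left] at ha
    split_ifs at ha with hi
    exacts [⟨i, hi, rfl⟩, absurd ha (lt_irrefl r)]
  | right b => simp [tag] at ha

lemma key_natAdd_ne {x : ProdTerm α r s} {i : Fin r} (hi : i ∈ x.1.1) (b : Fin s) :
    x.key (Fin.natAdd r b) ≠ x.key (Fin.castAdd s i) := by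
  simp [key, tag, hi, i.isLt.ne']

end ProdTerm

variable [LinearOrder α]

def prodChains : Set (ProdTerm α r s) :=
  {x | MonotoneWithTiesIn ↑x.1.1 x.1.2 ∧ StrictMono x.2}

def stuffleChains : Set (StuffleTerm α r s) :=
  {z | z.1 ≤ min r s ∧ IsStuffle r s z.2.1 ∧ (∀ b, z.2.1 (Fin.natAdd r b) ∉ z.2.2.1) ∧
    MonotoneWithTiesIn ↑z.2.2.1 z.2.2.2}

namespace ProdTerm

variable {x : ProdTerm α r s}

lemma key_castAdd_strictMono (hx : x ∈ prodChains) : StrictMono (x.key ∘ Fin.castAdd s) := by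
  intro i i' hii
  simp only [Function.comp, key, tag, Fin.append_left, Prod.Lex.toLex_lt_toLex]
  rcases (hx.1.1 hii.le).lt_or_eq with hlt | heq
  · exact .inl hlt
  · refine .inr ⟨heq, ?_⟩
    rw [if_pos (show i ∈ x.1.1 from hx.1.2 hii heq)]
    split_ifs <;> omega

lemma key_natAdd_strictMono (hx : x ∈ prodChains) : StrictMono (x.key ∘ Fin.natAdd r) :=
  fun _ _ hbb => Prod.Lex.toLex_lt_toLex.2 (.inl (by simpa using hx.2 hbb))

lemma exists_mem_of_key_lt {a a' : Fin (r + s)} (hlt : x.key a < x.key a')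
    (heq : Fin.append x.1.2 x.2 a = Fin.append x.1.2 x.2 a') :
    ∃ i ∈ x.1.1, a = Fin.castAdd s i := by
  simp only [key, Prod.Lex.toLex_lt_toLex, heq, lt_irrefl, false_or, true_and] at hlt
  exact exists_mem_of_tag_lt (hlt.trans_le (x.tag_le a'))

lemma card_image_key_le (x : ProdTerm α r s) : #(univ.image x.key) ≤ r + s :=
  card_image_le.trans (by simp)

lemma le_card_image_key {t : ℕ} (e : Fin t → Fin (r + s)) (he : StrictMono (x.key ∘ e)) :
    t ≤ #(univ.image x.key) := by
  simpa using card_le_card_of_injOn (s := univ) (x.key ∘ e) (fun _ _ => by simp)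
    he.injective.injOn

noncomputable def mergeAt (x : ProdTerm α r s) {c : ℕ} (h : #(univ.image x.key) = c) :
    (Fin (r + s) → Fin c) × (Finset (Fin c) × (Fin c → α)) :=
  (rankOf x.key h, x.1.1.image (rankOf x.key h ∘ Fin.castAdd s),
    fun j => (ofLex ((univ.image x.key).orderEmbOfFin h j)).1)

noncomputable def merge (x : ProdTerm α r s) : StuffleTerm α r s :=
  ⟨r + s - #(univ.image x.key), x.mergeAt (by have := x.card_image_key_le; omega)⟩

lemma merge_eq {d : ℕ} (hd : d ≤ r + s) (h : #(univ.image x.key) = r + s - d) :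
    x.merge = ⟨d, x.mergeAt h⟩ := by
  obtain rfl : d = r + s - #(univ.image x.key) := by omega
  rfl

lemma mergeAt_mem (hx : x ∈ prodChains) {d : ℕ} (h : #(univ.image x.key) = r + s - d)
    (hd : d ≤ min r s) : (⟨d, x.mergeAt h⟩ : StuffleTerm α r s) ∈ stuffleChains := by
  refine ⟨hd, ⟨rankOf_surjective h, fun _ _ hii => (rankOf_lt_rankOf_iff h).2
    (key_castAdd_strictMono hx hii), fun _ _ hbb => (rankOf_lt_rankOf_iff h).2
    (key_natAdd_strictMono hx hbb)⟩, fun b hb => ?_, ?_⟩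
  · obtain ⟨i, hi, he⟩ := mem_image.1 hb
    exact key_natAdd_ne hi b ((rankOf_eq_rankOf_iff h).1 he).symm
  · refine ⟨Prod.Lex.monotone_fst_ofLex.comp (orderEmbOfFin _ h).monotone, fun j j' hjj he => ?_⟩
    obtain ⟨a, rfl⟩ := rankOf_surjective h j
    obtain ⟨a', rfl⟩ := rankOf_surjective h j'
    dsimp only [mergeAt] at he
    simp only [orderEmbOfFin_rankOf, key, ofLex_toLex] at he
    obtain ⟨i, hi, rfl⟩ := exists_mem_of_key_lt ((rankOf_lt_rankOf_iff h).1 hjj) he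
    exact mem_image_of_mem _ hi

lemma merge_mem (hx : x ∈ prodChains) : x.merge ∈ stuffleChains := by
  have hr := le_card_image_key _ (key_castAdd_strictMono hx)
  have hs := le_card_image_key _ (key_natAdd_strictMono hx)
  exact mergeAt_mem hx _ (by have := x.card_image_key_le; omega)

lemma split_mergeAt (hx : x ∈ prodChains) {d : ℕ} (h : #(univ.image x.key) = r + s - d) :
    StuffleTerm.split ⟨d, x.mergeAt h⟩ = x := by
  have hinj : Function.Injective (rankOf x.key h ∘ Fin.castAdd s) := fun _ _ he =>
    (key_castAdd_strictMono hx).injective ((rankOf_eq_rankOf_iff h).1 he)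
  refine Prod.ext (Prod.ext ?_ ?_) ?_
  · ext i
    simp only [mergeAt, StuffleTerm.split, mem_filter, mem_univ, true_and, mem_image]
    exact ⟨fun ⟨_, hi, he⟩ => hinj he ▸ hi, fun hi => ⟨i, hi, rfl⟩⟩
  all_goals funext; simp [mergeAt, StuffleTerm.split, key]

lemma split_merge (hx : x ∈ prodChains) : x.merge.split = x :=
  split_mergeAt hx _

end ProdTerm

lemma StuffleTerm.split_mem {z : StuffleTerm α r s} (hz : z ∈ stuffleChains) :
    z.split ∈ prodChains := by
  obtain ⟨d, σ, B, p⟩ := z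
  obtain ⟨-, ⟨-, hσl, hσr⟩, hB, hp⟩ := hz
  refine ⟨?_, fun b b' hbb => hp.lt_of_notMem (hσr hbb) (hB b)⟩
  have hA : ((univ.filter fun i => σ (Fin.castAdd s i) ∈ B : Finset (Fin r)) : Set (Fin r)) =
      (σ ∘ Fin.castAdd s) ⁻¹' ↑B := by
    ext; simp
  simpa [StuffleTerm.split, hA] using hp.comp hσl

lemma StuffleTerm.existsUnique_preimage {z : StuffleTerm α r s} (hz : z ∈ stuffleChains) :
    ∀ j ∈ z.2.2.1, ∃! a, z.2.1 a = j := by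
  obtain ⟨d, σ, B, p⟩ := z
  obtain ⟨-, ⟨hσ, hσl, -⟩, hB, -⟩ := hz
  intro j hj
  obtain ⟨a, rfl⟩ := hσ j
  exact ⟨a, rfl, fun a' he => (eq_of_apply_eq_of_apply_mem hσl hB hj he.symm).symm⟩

lemma StuffleTerm.key_split {z : StuffleTerm α r s} (hz : z ∈ stuffleChains) (a : Fin (r + s)) :
    z.split.key a = toLex (z.2.2.2 (z.2.1 a), if z.2.1 a ∈ z.2.2.1 then (a : ℕ) else r) := by
  induction a using Fin.addCases with
  | left i => simp [ProdTerm.key, ProdTerm.tag, split]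
  | right b => simp [ProdTerm.key, ProdTerm.tag, split, hz.2.2.1 b]

lemma StuffleTerm.merge_split {z : StuffleTerm α r s} (hz : z ∈ stuffleChains) :
    z.split.merge = z := by
  have hkey := key_split hz
  obtain ⟨d, σ, B, p⟩ := z
  obtain ⟨hd, ⟨hσ, hσl, -⟩, hB, hp⟩ := hz
  have h_eq : ∀ a a', σ a = σ a' → (split ⟨d, σ, B, p⟩).key a = (split ⟨d, σ, B, p⟩).key a' := by
    intro a a' he
    by_cases ha : σ a ∈ B
    · rw [eq_of_apply_eq_of_apply_mem hσl hB ha he]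
    · simp only [hkey, he, if_neg (he ▸ ha : σ a' ∉ B)]
  have h_lt : ∀ a a', σ a < σ a' → (split ⟨d, σ, B, p⟩).key a < (split ⟨d, σ, B, p⟩).key a' := by
    intro a a' hlt
    rw [hkey, hkey, Prod.Lex.toLex_lt_toLex]
    rcases (hp.1 hlt.le).lt_or_eq with hlt' | heq
    · exact .inl hlt'
    refine .inr ⟨heq, ?_⟩
    have ha : σ a ∈ B := hp.2 hlt heq
    obtain ⟨i, rfl⟩ := exists_eq_castAdd_of_apply_mem hB ha
    rw [if_pos ha]
    split_ifs with ha'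
    · obtain ⟨i', rfl⟩ := exists_eq_castAdd_of_apply_mem hB ha'
      simpa using hσl.lt_iff_lt.1 hlt
    · simp
  obtain ⟨h, hρ⟩ := exists_rankOf_eq hσ h_eq h_lt
  rw [ProdTerm.merge_eq (by omega) h, ProdTerm.mergeAt, hρ]
  congr
  · ext j
    simp only [split, mem_image, mem_filter, mem_univ, true_and, Function.comp_apply]
    refine ⟨fun ⟨i, hi, he⟩ => he ▸ hi, fun hj => ?_⟩
    obtain ⟨a, rfl⟩ := hσ j
    obtain ⟨i, rfl⟩ := exists_eq_castAdd_of_apply_mem hB hj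
    exact ⟨i, hj, rfl⟩
  · funext j
    obtain ⟨a, rfl⟩ := hσ j
    have := orderEmbOfFin_rankOf h a
    rw [hρ] at this
    simp [this, hkey]

end Stuffle

section Terms

variable {ι κ : Type*} [Fintype ι]

def contractIndex [DecidableEq κ] (σ : ι → κ) (K : ι → ℕ) (j : κ) : ℕ :=
  ∑ a ∈ univ.filter (fun a => σ a = j), K a

lemma fiber_eq_singleton [DecidableEq κ] {σ : ι → κ} {a : ι} (h : ∀ a', σ a' = σ a → a' = a) :
    univ.filter (fun a' => σ a' = σ a) = {a} :=
  eq_singleton_iff_unique_mem.2 ⟨by simp, fun a' ha' => h a' (mem_filter.1 ha').2⟩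

lemma contractIndex_apply_of_unique [DecidableEq κ] {σ : ι → κ} (K : ι → ℕ) {a : ι}
    (h : ∀ a', σ a' = σ a → a' = a) : contractIndex σ K (σ a) = K a := by
  rw [contractIndex, fiber_eq_singleton h, sum_singleton]

lemma le_contractIndex [DecidableEq κ] (σ : ι → κ) (K : ι → ℕ) (a : ι) :
    K a ≤ contractIndex σ K (σ a) :=
  single_le_sum (fun _ _ => Nat.zero_le _) (by simp)

variable [DecidableEq ι]

noncomputable def diaTerm (N : ℕ) (k : ι → ℕ) (A : Finset ι) (n : ι → Fin N) : ℚ :=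
  ∏ i, if i ∈ A then (1 : ℚ) / ((N : ℚ) - ((n i : ℕ) : ℚ)) else (1 : ℚ) / (((n i : ℕ) : ℚ) ^ k i)

noncomputable def mhsTerm (N : ℕ) (l : ι → ℕ) (m : ι → Fin N) : ℚ :=
  ∏ b, (1 : ℚ) / (((m b : ℕ) : ℚ) ^ l b)

noncomputable def diaSupport [Preorder ι] (N : ℕ) (k : ι → ℕ) : Finset (Finset ι × (ι → Fin N)) :=
  univ.filter fun x =>
    (∀ i ∈ x.1, k i = 1) ∧ (∀ i, 0 < (x.2 i : ℕ)) ∧ MonotoneWithTiesIn (x.1 : Set ι) x.2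

noncomputable def mhsSupport (N s : ℕ) : Finset (Fin s → Fin N) :=
  univ.filter fun m => (∀ i, 0 < (m i : ℕ)) ∧ StrictMono m

lemma diaTerm_contractIndex [Fintype κ] [DecidableEq κ] (N : ℕ) (σ : ι → κ) (K : ι → ℕ)
    {B : Finset κ} (p : κ → Fin N) (hB : ∀ j ∈ B, ∃! a, σ a = j) :
    diaTerm N (contractIndex σ K) B p = diaTerm N K (univ.filter fun a => σ a ∈ B) (p ∘ σ) := by
  rw [diaTerm, diaTerm, ← prod_fiberwise univ σ]
  refine prod_congr rfl fun j _ => ?_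
  split_ifs with hj
  · obtain ⟨a, rfl, ha⟩ := hB j hj
    rw [fiber_eq_singleton ha, prod_singleton]
    simp [hj]
  · rw [contractIndex, ← prod_pow_eq_pow_sum, ← prod_const_one, ← prod_div_distrib]
    refine prod_congr rfl fun a ha => ?_
    obtain rfl := (mem_filter.1 ha).2
    simp [hj]

end Terms

section HarmonicProduct

variable {N r s : ℕ}

lemma zdiaF_eq_sum {t : ℕ} (k : Fin t → ℕ) :
    zdiaF N k = ∑ x ∈ diaSupport N k, diaTerm N k x.1 x.2 := by
  rw [zdiaF, diaSupport, sum_filter, Fintype.sum_prod_type]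
  refine sum_congr rfl fun A _ => ?_
  split_ifs with hA
  · rw [sum_filter]
    refine sum_congr rfl fun n _ => ?_
    simp [eq_true hA, Fin.step_iff_monotoneWithTiesIn, diaTerm]
  · simp [hA]

lemma zdiaF_mul_mhsF (k : Fin r → ℕ) (l : Fin s → ℕ) :
    zdiaF N k * mhsF N l =
      ∑ x ∈ diaSupport N k ×ˢ mhsSupport N s, diaTerm N k x.1.1 x.1.2 * mhsTerm N l x.2 := by
  rw [zdiaF_eq_sum, mhsF, sum_mul_sum, sum_product]
  rfl

noncomputable def stuffleSupport (N : ℕ) (k : Fin r → ℕ) (l : Fin s → ℕ) :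
    Finset (StuffleTerm (Fin N) r s) :=
  (range (min r s + 1)).sigma fun _ => univ.filter fun y =>
    IsStuffle r s y.1 ∧ y.2 ∈ diaSupport N (contractIndex y.1 (Fin.append k l))

lemma sum_stuffleSupport (k : Fin r → ℕ) (l : Fin s → ℕ) :
    ∑ d ∈ range (min r s + 1),
        ∑ σ ∈ univ.filter (fun σ : Fin (r + s) → Fin (r + s - d) =>
            Function.Surjective σ ∧
            StrictMono (σ ∘ Fin.castAdd s) ∧ StrictMono (σ ∘ Fin.natAdd r)),
          zdiaF N (fun j => ∑ a ∈ univ.filter (fun a => σ a = j), Fin.append k l a) =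
      ∑ z ∈ stuffleSupport N k l,
        diaTerm N (contractIndex z.2.1 (Fin.append k l)) z.2.2.1 z.2.2.2 := by
  rw [stuffleSupport, sum_sigma]
  refine sum_congr rfl fun d _ => ?_
  simp_rw [zdiaF_eq_sum]
  refine (sum_finset_product' _ _ _ fun _ => ?_).symm
  simp only [mem_filter, mem_univ, true_and]
  rfl

lemma diaTerm_split (k : Fin r → ℕ) (l : Fin s → ℕ) {z : StuffleTerm (Fin N) r s}
    (hz : z ∈ stuffleChains) :
    diaTerm N (contractIndex z.2.1 (Fin.append k l)) z.2.2.1 z.2.2.2 =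
      diaTerm N k z.split.1.1 z.split.1.2 * mhsTerm N l z.split.2 := by
  rw [diaTerm_contractIndex N _ _ _ (StuffleTerm.existsUnique_preimage hz), diaTerm,
    Fin.prod_univ_add]
  obtain ⟨d, σ, B, p⟩ := z
  have hB : ∀ b, σ (Fin.natAdd r b) ∉ B := hz.2.2.1
  congr 1
  · simp [diaTerm, StuffleTerm.split]
  · simp [mhsTerm, StuffleTerm.split, hB]

lemma mem_prodChains_of_mem_product {k : Fin r → ℕ} {x : ProdTerm (Fin N) r s}
    (hx : x ∈ diaSupport N k ×ˢ mhsSupport N s) : x ∈ prodChains := by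
  simp only [mem_product, diaSupport, mhsSupport, mem_filter] at hx
  exact ⟨hx.1.2.2.2, hx.2.2.2⟩

lemma contractIndex_append_castAdd {c : ℕ} {σ : Fin (r + s) → Fin c} {B : Finset (Fin c)}
    (hσ : StrictMono (σ ∘ Fin.castAdd s)) (hB : ∀ b, σ (Fin.natAdd r b) ∉ B)
    (k : Fin r → ℕ) (l : Fin s → ℕ) {i : Fin r} (hi : σ (Fin.castAdd s i) ∈ B) :
    contractIndex σ (Fin.append k l) (σ (Fin.castAdd s i)) = k i := by
  rw [contractIndex_apply_of_unique _ fun _ he =>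
    (eq_of_apply_eq_of_apply_mem hσ hB hi he.symm).symm, Fin.append_left]

lemma mem_stuffleSupport_iff {k : Fin r → ℕ} {l : Fin s → ℕ} (hl : ∀ b, 2 ≤ l b)
    {z : StuffleTerm (Fin N) r s} :
    z ∈ stuffleSupport N k l ↔ z ∈ stuffleChains ∧ z.split ∈ diaSupport N k ×ˢ mhsSupport N s := by
  obtain ⟨d, σ, B, p⟩ := z
  simp only [stuffleSupport, diaSupport, mhsSupport, stuffleChains, mem_sigma, mem_range,
    mem_filter, mem_univ, true_and, mem_product, Set.mem_ofPred_eq]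
  constructor
  · rintro ⟨hd, hσ, hB1, hpos, hp⟩
    have hB : ∀ b, σ (Fin.natAdd r b) ∉ B := fun b hb => by
      have := le_contractIndex σ (Fin.append k l) (Fin.natAdd r b)
      rw [hB1 _ hb, Fin.append_right] at this
      linarith [hl b]
    have hz : (⟨d, σ, B, p⟩ : StuffleTerm (Fin N) r s) ∈ stuffleChains :=
      ⟨Nat.lt_succ_iff.1 hd, hσ, hB, hp⟩
    obtain ⟨hn, hm⟩ := StuffleTerm.split_mem hz
    refine ⟨hz, ⟨fun i hi => ?_, fun i => hpos _, hn⟩, fun b => hpos _, hm⟩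
    replace hi : σ (Fin.castAdd s i) ∈ B := by simpa [StuffleTerm.split] using hi
    rw [← contractIndex_append_castAdd hσ.2.1 hB k l hi, hB1 _ hi]
  · rintro ⟨⟨hd, hσ, hB, hp⟩, ⟨hk1, hnpos, -⟩, hmpos, -⟩
    refine ⟨Nat.lt_succ_iff.2 hd, hσ, fun j hj => ?_, fun j => ?_, hp⟩
    · obtain ⟨a, rfl⟩ := hσ.1 j
      obtain ⟨i, rfl⟩ := exists_eq_castAdd_of_apply_mem hB hj
      rw [contractIndex_append_castAdd hσ.2.1 hB k l hj]
      exact hk1 i (by simpa [StuffleTerm.split] using hj)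
    · obtain ⟨a, rfl⟩ := hσ.1 j
      induction a using Fin.addCases with
      | left i => exact hnpos i
      | right b => exact hmpos b

end HarmonicProduct

theorem zdia_harmonic_product_general (N : ℕ) (r s : ℕ)
    (k : Fin r → ℕ) (l : Fin s → ℕ)
    (hl : ∀ i, 2 ≤ l i) :
    zdiaF N k * mhsF N l =
      ∑ d ∈ Finset.range (min r s + 1),
        ∑ σ ∈ Finset.univ.filter (fun σ : Fin (r + s) → Fin (r + s - d) =>
            Function.Surjective σ ∧
            StrictMono (σ ∘ Fin.castAdd s) ∧ StrictMono (σ ∘ Fin.natAdd r)),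
          zdiaF N (fun j => ∑ a ∈ Finset.univ.filter (fun a => σ a = j),
            Fin.append k l a) := by
  rw [zdiaF_mul_mhsF, sum_stuffleSupport]
  symm
  refine sum_nbij' StuffleTerm.split ProdTerm.merge
    (fun z hz => ((mem_stuffleSupport_iff hl).1 hz).2)
    (fun x hx => (mem_stuffleSupport_iff hl).2
      ⟨ProdTerm.merge_mem (mem_prodChains_of_mem_product hx),
        by rwa [ProdTerm.split_merge (mem_prodChains_of_mem_product hx)]⟩)
    (fun z hz => StuffleTerm.merge_split ((mem_stuffleSupport_iff hl).1 hz).1)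
    (fun x hx => ProdTerm.split_merge (mem_prodChains_of_mem_product hx))
    (fun z hz => diaTerm_split k l ((mem_stuffleSupport_iff hl).1 hz).1)

/-- **Restricted harmonic product formula for `ζ◇`.**
For an admissible index `k` of depth `r` and an index `l` of depth `s` with all entries
`≥ 2`, and for every positive integer `N`:
`ζ◇_N(k)·ζ_N(l) = ∑_{d=0}^{min(r,s)} ∑_{σ ∈ Σ_{r,s,d}} ζ◇_N(k^σ₁,…,k^σ_{r+s-d})`,
where `Σ_{r,s,d}` is the set of surjections `σ : Fin (r+s) → Fin (r+s-d)` which are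
strictly increasing on the first `r` and on the last `s` positions, and
`k^σ_j = ∑_{σ a = j} (k ⊕ l) a`. -/
theorem zdia_harmonic_product (N : ℕ) (hN : 0 < N) (r s : ℕ) (hr : 0 < r)
    (k : Fin r → ℕ) (l : Fin s → ℕ)
    (hk : ∀ i, 0 < k i) (hkadm : ∀ i : Fin r, (i : ℕ) + 1 = r → 2 ≤ k i)
    (hl : ∀ i, 2 ≤ l i) :
    zdiaF N k * mhsF N l =
      ∑ d ∈ Finset.range (min r s + 1),
        ∑ σ ∈ Finset.univ.filter (fun σ : Fin (r + s) → Fin (r + s - d) =>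
            Function.Surjective σ ∧
            StrictMono (σ ∘ Fin.castAdd s) ∧ StrictMono (σ ∘ Fin.natAdd r)),
          zdiaF N (fun j => ∑ a ∈ Finset.univ.filter (fun a => σ a = j),
            Fin.append k l a) :=
  zdia_harmonic_product_general N r s k l hl
end

section
/- For every positive integer N and every admissible index k=(k_1,…,k_r): ζ^◇⋆_N(k) = Σ_{A ⊂ [r]^1_k} Σ_{(n_1,…,n_r) ∈ S*_{r,N}(A)} (Π_{i∈A} 1/(N−n_i))·(Π_{i∉A} 1/n_i^{k_i}), where S*_{r,N}(A) is the set of tuples (n_1,…,n_r) ∈ {1,…,N−1}^r such that for each i ∈ {1,…,r−1}: n_i ≤ n_{i+1} if i ∈ A or i+1 ∉ A, and n_i < n_{i+1} if i ∉ A and i+1 ∈ A. -/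
/-!
Both sides are transfer sums over chains of states `(i ∈ A, nᵢ)`: consecutive states are
constrained by a relation (`diaRel` for `ζ◇`, `starRel` for the star expression) and each
position contributes a weight. The two relations differ only between consecutive positions
outside `A`, where the star expression also allows `nᵢ = nᵢ₊₁`; a pair of equal neighbours
is one variable carrying `1/nᵢ^(kᵢ + kᵢ₊₁)`, i.e. a term of `ζ◇` of the coarsening merging
them. Peeling off the first entry of `k`, the star chain sum from a state therefore equals
the sum over the coarsenings `l ⪯ k` of the `◇` chain sums, plus, from a state outside `A`
of value `m`, the terms in which the first variable equals `m` and is merged into it.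
-/

open scoped Classical

/-- The modified multiple harmonic sum `ζ◇_N(k)` for an index given as a list. -/
noncomputable def zdiaL (N : ℕ) (k : List ℕ) : ℚ :=
  ∑ A : Finset (Fin k.length),
    if ∀ i ∈ A, k.get i = 1 then
      ∑ n ∈ Finset.univ.filter (fun n : Fin k.length → Fin N =>
        (∀ i, 0 < (n i : ℕ)) ∧
        ∀ (i : Fin k.length) (h : (i : ℕ) + 1 < k.length),
          if i ∈ A then n i ≤ n ⟨(i : ℕ) + 1, h⟩ else n i < n ⟨(i : ℕ) + 1, h⟩),
        ∏ i : Fin k.length,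
          if i ∈ A then (1 : ℚ) / ((N : ℚ) - ((n i : ℕ) : ℚ))
          else (1 : ℚ) / (((n i : ℕ) : ℚ) ^ k.get i)
    else 0

/-- The finite set of coarsenings of an index `k`: all indices `l ⪯ k` obtained by
partitioning `k` into consecutive blocks and summing each block. -/
def coarsenings : List ℕ → Finset (List ℕ)
  | [] => {[]}
  | a :: k =>
      (coarsenings k).image (fun l => a :: l) ∪
      (coarsenings k).image (fun l => match l with
        | [] => [a]
        | c :: t => (a + c) :: t)

namespace ZetaDiamond

/-- A state `(b, n)` records whether a position lies in `A` and the value `n` of its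
variable. -/
def toState {N : ℕ} (x : Bool × Fin N) : Bool × ℕ := (x.1, x.2)

/-- The weight absorbs the constraints `∀ i ∈ A, kᵢ = 1` and `0 < nᵢ`. -/
noncomputable def weight (N a : ℕ) (x : Bool × ℕ) : ℚ :=
  if 0 < x.2 then (if x.1 then (if a = 1 then 1 / ((N : ℚ) - x.2) else 0) else 1 / (x.2 : ℚ) ^ a)
  else 0

def diaRel (s x : Bool × ℕ) : Prop := if s.1 then s.2 ≤ x.2 else s.2 < x.2

def starRel (s x : Bool × ℕ) : Prop := if s.1 ∨ !x.1 then s.2 ≤ x.2 else s.2 < x.2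

noncomputable def chainSum (N : ℕ) (c : Bool × ℕ → Bool × ℕ → Prop) :
    List ℕ → Bool × ℕ → ℚ
  | [], _ => 1
  | a :: k, s => ∑ x : Bool × Fin N with c s (toState x),
      weight N a (toState x) * chainSum N c k (toState x)

theorem chainSum_eq_sum_fun (N : ℕ) (c : Bool × ℕ → Bool × ℕ → Prop) (k : List ℕ)
    (s : Bool × ℕ) :
    chainSum N c k s = ∑ g : Fin k.length → Bool × Fin N,
      if (s :: List.ofFn fun i => toState (g i)).IsChain c then
        ∏ i, weight N (k.get i) (toState (g i)) else 0 := by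
  induction k generalizing s with
  | nil => simp [chainSum]
  | cons a k ih =>
    refine Eq.trans ?_ ((Fin.consEquiv fun _ => Bool × Fin N).sum_comp _)
    rw [Fintype.sum_prod_type, chainSum, Finset.sum_filter]
    refine Finset.sum_congr rfl fun x _ => ?_
    simp only [ih, Finset.mul_sum, Fin.consEquiv_apply, List.ofFn_succ,
      Fin.cons_zero, Fin.cons_succ, List.isChain_cons_cons]
    by_cases hc : c s (toState x)
    · simp [hc, Fin.prod_univ_succ, mul_ite]
    · simp [hc]

theorem prod_weight_eq_ite {r : ℕ} (N : ℕ) (k : Fin r → ℕ) (A : Finset (Fin r)) (n : Fin r → ℕ) :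
    ∏ i, weight N (k i) (decide (i ∈ A), n i) =
      if (∀ i ∈ A, k i = 1) ∧ ∀ i, 0 < n i then
        ∏ i, (if i ∈ A then 1 / ((N : ℚ) - n i) else 1 / (n i : ℚ) ^ k i) else 0 := by
  split_ifs with h
  · exact Finset.prod_congr rfl fun i _ => by
      by_cases hi : i ∈ A <;> simp [weight, hi, h.2 i, h.1 i]
  · obtain ⟨i, hi⟩ : ∃ i, weight N (k i) (decide (i ∈ A), n i) = 0 := by
      simp only [not_and_or, not_forall] at h
      rcases h with ⟨i, hiA, hk⟩ | ⟨i, hn⟩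
      · exact ⟨i, by simp [weight, hiA, hk]⟩
      · exact ⟨i, by simp [weight, hn]⟩
    exact Finset.prod_eq_zero (Finset.mem_univ i) hi

theorem guarded_sum_eq_sum_weight {r : ℕ} (N : ℕ) (k : Fin r → ℕ) (A : Finset (Fin r))
    (p : (Fin r → Fin N) → Prop) [DecidablePred p] :
    (if ∀ i ∈ A, k i = 1 then
      ∑ n ∈ Finset.univ.filter (fun n : Fin r → Fin N => (∀ i, 0 < (n i : ℕ)) ∧ p n),
        ∏ i, (if i ∈ A then 1 / ((N : ℚ) - (n i : ℕ)) else 1 / ((n i : ℕ) : ℚ) ^ k i)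
      else 0) =
      ∑ n : Fin r → Fin N, if p n then ∏ i, weight N (k i) (decide (i ∈ A), n i) else 0 := by
  split_ifs with hA
  · rw [Finset.sum_filter]
    refine Finset.sum_congr rfl fun n _ => ?_
    simp only [prod_weight_eq_ite, and_iff_right hA]
    by_cases hp : p n <;> by_cases hn : ∀ i, 0 < (n i : ℕ) <;> simp [hp, hn]
  · refine (Finset.sum_eq_zero fun n _ => ?_).symm
    simp [prod_weight_eq_ite, hA]

def finsetEquivBoolFun (α : Type*) [Fintype α] [DecidableEq α] : Finset α ≃ (α → Bool) where
  toFun A i := decide (i ∈ A)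
  invFun b := Finset.univ.filter (b · = true)
  left_inv A := by ext; simp
  right_inv b := by funext; simp

theorem sum_eq_chainSum (N : ℕ) (c : Bool × ℕ → Bool × ℕ → Prop)
    (hc : ∀ x, c (true, 0) x) (k : List ℕ)
    (P : Finset (Fin k.length) → (Fin k.length → Fin N) → Prop) [∀ A, DecidablePred (P A)]
    (hP : ∀ A n, P A n ↔ (List.ofFn fun i => (decide (i ∈ A), (n i : ℕ))).IsChain c) :
    ∑ A : Finset (Fin k.length), (if ∀ i ∈ A, k.get i = 1 then
      ∑ n ∈ Finset.univ.filter (fun n => (∀ i, 0 < (n i : ℕ)) ∧ P A n),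
        ∏ i, (if i ∈ A then 1 / ((N : ℚ) - (n i : ℕ)) else 1 / ((n i : ℕ) : ℚ) ^ k.get i)
      else 0) = chainSum N c k (true, 0) := by
  simp only [guarded_sum_eq_sum_weight, hP]
  refine (Fintype.sum_equiv (finsetEquivBoolFun _) _ (fun b => ∑ n : Fin k.length → Fin N,
      if (List.ofFn fun i => (b i, (n i : ℕ))).IsChain c then
        ∏ i, weight N (k.get i) (b i, n i) else 0) fun _ => rfl).trans ?_
  rw [← Fintype.sum_prod_type',
    ← (Equiv.arrowProdEquivProdArrow _ (fun _ => Bool) (fun _ => Fin N)).sum_comp,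
    chainSum_eq_sum_fun]
  refine Finset.sum_congr rfl fun g _ => ?_
  simp [toState, List.isChain_cons, hc]

theorem isChain_ofFn_iff {α : Type*} {r : ℕ} (c : α → α → Prop) (f : Fin r → α) :
    (List.ofFn f).IsChain c ↔ ∀ (i : Fin r) (h : (i : ℕ) + 1 < r), c (f i) (f ⟨i + 1, h⟩) := by
  rw [List.isChain_ofFn]
  exact ⟨fun H i h => H i h, fun H i h => H ⟨i, by omega⟩ h⟩

theorem isChain_diaRel_iff {r N : ℕ} (A : Finset (Fin r)) (n : Fin r → Fin N) :
    (List.ofFn fun i => (decide (i ∈ A), (n i : ℕ))).IsChain diaRel ↔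
      ∀ (i : Fin r) (h : (i : ℕ) + 1 < r),
        if i ∈ A then n i ≤ n ⟨i + 1, h⟩ else n i < n ⟨i + 1, h⟩ := by
  rw [isChain_ofFn_iff]
  refine forall₂_congr fun i h => ?_
  by_cases hi : i ∈ A <;> simp [diaRel, hi]

theorem isChain_starRel_iff {r N : ℕ} (A : Finset (Fin r)) (n : Fin r → Fin N) :
    (List.ofFn fun i => (decide (i ∈ A), (n i : ℕ))).IsChain starRel ↔
      ∀ (i : Fin r) (h : (i : ℕ) + 1 < r),
        if i ∉ A ∧ (⟨i + 1, h⟩ : Fin r) ∈ A then n i < n ⟨i + 1, h⟩ else n i ≤ n ⟨i + 1, h⟩ := by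
  rw [isChain_ofFn_iff]
  refine forall₂_congr fun i h => ?_
  by_cases hi : i ∈ A <;> by_cases hj : (⟨i + 1, h⟩ : Fin r) ∈ A <;> simp [starRel, hi, hj]

theorem zdiaL_eq_chainSum (N : ℕ) (k : List ℕ) : zdiaL N k = chainSum N diaRel k (true, 0) :=
  sum_eq_chainSum N diaRel (fun _ => by simp [diaRel]) k _ fun A n => (isChain_diaRel_iff A n).symm

def addToHead (a : ℕ) : List ℕ → List ℕ
  | [] => [a]
  | c :: l => (a + c) :: l

theorem coarsenings_cons (a : ℕ) (k : List ℕ) :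
    coarsenings (a :: k) =
      (coarsenings k).image (a :: ·) ∪ (coarsenings k).image (addToHead a) := by
  rw [coarsenings]
  congr 1

theorem coarsenings_singleton (a : ℕ) : coarsenings [a] = {[a]} := by
  simp [coarsenings]

theorem ne_nil_of_mem_coarsenings {k l : List ℕ} (hk : k ≠ []) (hl : l ∈ coarsenings k) :
    l ≠ [] := by
  obtain ⟨a, k, rfl⟩ := List.exists_cons_of_ne_nil hk
  rw [coarsenings_cons] at hl
  rcases Finset.mem_union.mp hl with h | h <;> obtain ⟨l', -, rfl⟩ := Finset.mem_image.mp h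
  · simp
  · cases l' <;> simp [addToHead]

theorem pos_of_mem_coarsenings {k l : List ℕ} (hk : ∀ x ∈ k, 0 < x) (hl : l ∈ coarsenings k) :
    ∀ x ∈ l, 0 < x := by
  induction k generalizing l with
  | nil => simp_all [coarsenings]
  | cons a k ih =>
    simp only [List.mem_cons, forall_eq_or_imp] at hk
    rw [coarsenings_cons] at hl
    rcases Finset.mem_union.mp hl with h | h <;> obtain ⟨l', hl', rfl⟩ := Finset.mem_image.mp h
    · simpa using ⟨hk.1, ih hk.2 hl'⟩
    · cases l' with
      | nil => simpa [addToHead] using hk.1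
      | cons c l' =>
        have := ih hk.2 hl'
        simp only [addToHead, List.mem_cons, forall_eq_or_imp] at this ⊢
        exact ⟨by omega, this.2⟩

theorem exists_pos_cons_of_mem_coarsenings {k l : List ℕ} (hk : k ≠ [])
    (hpos : ∀ x ∈ k, 0 < x) (hl : l ∈ coarsenings k) : ∃ c l', l = c :: l' ∧ 0 < c := by
  obtain ⟨c, l', rfl⟩ := List.exists_cons_of_ne_nil (ne_nil_of_mem_coarsenings hk hl)
  exact ⟨c, l', rfl, pos_of_mem_coarsenings hpos hl c List.mem_cons_self⟩

theorem sum_coarsenings_cons {M : Type*} [AddCommMonoid M] (a : ℕ) {k : List ℕ} (hk : k ≠ [])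
    (hpos : ∀ x ∈ k, 0 < x) (f : List ℕ → M) :
    ∑ l ∈ coarsenings (a :: k), f l =
      ∑ l ∈ coarsenings k, f (a :: l) + ∑ l ∈ coarsenings k, f (addToHead a l) := by
  have hcons l (hl : l ∈ coarsenings k) := exists_pos_cons_of_mem_coarsenings hk hpos hl
  rw [coarsenings_cons, Finset.sum_union, Finset.sum_image, Finset.sum_image]
  · intro l₁ h₁ l₂ h₂ h
    obtain ⟨c₁, l₁, rfl, -⟩ := hcons l₁ h₁
    obtain ⟨c₂, l₂, rfl, -⟩ := hcons l₂ h₂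
    simp only [addToHead, List.cons.injEq, Nat.add_left_cancel_iff] at h
    rw [h.1, h.2]
  · exact fun _ _ _ _ h => List.cons_injective h
  · refine Finset.disjoint_left.mpr fun l h₁ h₂ => ?_
    obtain ⟨l₁, -, rfl⟩ := Finset.mem_image.mp h₁
    obtain ⟨l₂, h₂, h⟩ := Finset.mem_image.mp h₂
    obtain ⟨c, l₂, rfl, hc⟩ := hcons l₂ h₂
    simp only [addToHead, List.cons.injEq] at h
    omega

/-- The terms of `ζ◇(l)` whose first variable coincides with a preceding variable of value
`s.2` outside `A`, its entry being merged into that variable. -/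
noncomputable def mergeHead (N : ℕ) (s : Bool × ℕ) : List ℕ → ℚ
  | [] => 0
  | c :: l => if s.1 then 0 else 1 / (s.2 : ℚ) ^ c * chainSum N diaRel l s

theorem mergeHead_true (N p : ℕ) (l : List ℕ) : mergeHead N (true, p) l = 0 := by
  cases l <;> rfl

noncomputable def coarseningSum (N : ℕ) (k : List ℕ) (s : Bool × ℕ) : ℚ :=
  ∑ l ∈ coarsenings k, (chainSum N diaRel l s + mergeHead N s l)

theorem coarseningSum_nil (N : ℕ) (s : Bool × ℕ) : coarseningSum N [] s = 1 := by
  simp [coarseningSum, coarsenings, chainSum, mergeHead]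

theorem weight_add (N : ℕ) {a c : ℕ} (ha : 0 < a) (hc : 0 < c) (x : Bool × ℕ) :
    weight N (a + c) x = if x.1 then 0 else weight N a x / (x.2 : ℚ) ^ c := by
  rcases x with ⟨_ | _, m⟩
  · by_cases hm : 0 < m <;> simp [weight, hm, pow_add, div_eq_mul_inv, mul_comm]
  · simp [weight, show a + c ≠ 1 by omega]

theorem chainSum_add_cons (N : ℕ) {a c : ℕ} (ha : 0 < a) (hc : 0 < c) (l : List ℕ)
    (s : Bool × ℕ) :
    chainSum N diaRel ((a + c) :: l) s = ∑ x : Bool × Fin N with diaRel s (toState x),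
      weight N a (toState x) * mergeHead N (toState x) (c :: l) := by
  refine Finset.sum_congr rfl fun x _ => ?_
  rw [weight_add N ha hc, mergeHead]
  split_ifs <;> ring

theorem sum_coarsenings_chainSum_cons (N : ℕ) {a : ℕ} (ha : 0 < a) {k : List ℕ}
    (hpos : ∀ x ∈ k, 0 < x) (s : Bool × ℕ) :
    ∑ l ∈ coarsenings (a :: k), chainSum N diaRel l s =
      ∑ x : Bool × Fin N with diaRel s (toState x),
        weight N a (toState x) * coarseningSum N k (toState x) := by
  rcases eq_or_ne k [] with rfl | hk
  · simp [coarsenings_singleton, chainSum, coarseningSum_nil]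
  have hmerge : ∀ l ∈ coarsenings k, chainSum N diaRel (addToHead a l) s =
      ∑ x : Bool × Fin N with diaRel s (toState x),
        weight N a (toState x) * mergeHead N (toState x) l := fun l hl => by
    obtain ⟨c, l, rfl, hc⟩ := exists_pos_cons_of_mem_coarsenings hk hpos hl
    exact chainSum_add_cons N ha hc l s
  rw [sum_coarsenings_cons a hk hpos, Finset.sum_congr rfl hmerge]
  simp only [chainSum, coarseningSum, mul_add, Finset.mul_sum, Finset.sum_add_distrib]
  rw [Finset.sum_comm, Finset.sum_comm (s := coarsenings k)]

theorem sum_coarsenings_mergeHead_cons (N a : ℕ) {k : List ℕ} (hpos : ∀ x ∈ k, 0 < x)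
    {m : ℕ} (hm : 0 < m) :
    ∑ l ∈ coarsenings (a :: k), mergeHead N (false, m) l =
      weight N a (false, m) * coarseningSum N k (false, m) := by
  rcases eq_or_ne k [] with rfl | hk
  · simp [coarsenings_singleton, mergeHead, chainSum, coarseningSum_nil, weight, hm]
  rw [sum_coarsenings_cons a hk hpos, coarseningSum, Finset.mul_sum, ← Finset.sum_add_distrib]
  refine Finset.sum_congr rfl fun l hl => ?_
  obtain ⟨c, l, rfl, -⟩ := exists_pos_cons_of_mem_coarsenings hk hpos hl
  simp only [mergeHead, addToHead, weight, hm, pow_add, if_true, Bool.false_eq_true, if_false]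
  ring

theorem starRel_iff (s x : Bool × ℕ) :
    starRel s x ↔ diaRel s x ∨ s.1 = false ∧ x = (false, s.2) := by
  rcases s with ⟨_ | _, m⟩ <;> rcases x with ⟨_ | _, n⟩ <;>
    simp [starRel, diaRel, le_iff_lt_or_eq, eq_comm]

theorem sum_filter_starRel {M : Type*} [AddCommMonoid M] (N : ℕ) (s : Bool × ℕ)
    (f : Bool × Fin N → M) :
    ∑ x : Bool × Fin N with starRel s (toState x), f x =
      ∑ x : Bool × Fin N with diaRel s (toState x), f x +
        ∑ x : Bool × Fin N with s.1 = false ∧ toState x = (false, s.2), f x := by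
  simp only [starRel_iff, Finset.filter_or]
  refine Finset.sum_union (Finset.disjoint_filter.mpr fun x _ hdia ⟨hs, hx⟩ => ?_)
  rw [hx] at hdia
  simp [diaRel, hs] at hdia

theorem chainSum_starRel_eq_coarseningSum (N : ℕ) {k : List ℕ} (hpos : ∀ x ∈ k, 0 < x)
    {s : Bool × ℕ} (hs : s.1 = true ∨ 0 < s.2 ∧ s.2 < N) :
    chainSum N starRel k s = coarseningSum N k s := by
  induction k generalizing s with
  | nil => simp [chainSum, coarseningSum_nil]
  | cons a k ih =>
    simp only [List.mem_cons, forall_eq_or_imp] at hpos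
    have hstep : ∀ x : Bool × Fin N, weight N a (toState x) * chainSum N starRel k (toState x) =
        weight N a (toState x) * coarseningSum N k (toState x) := by
      rintro ⟨b, m⟩
      by_cases hm : 0 < (m : ℕ)
      · rw [ih hpos.2 (by cases b <;> simp [toState, hm])]
      · simp [weight, toState, hm]
    rw [chainSum, Finset.sum_congr rfl fun x _ => hstep x, sum_filter_starRel, coarseningSum,
      Finset.sum_add_distrib, sum_coarsenings_chainSum_cons N hpos.1 hpos.2]
    congr 1
    rcases s with ⟨_ | _, m⟩
    · obtain ⟨hm, hmN⟩ := hs.resolve_left (by simp)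
      rw [sum_coarsenings_mergeHead_cons N a hpos.2 hm,
        Finset.sum_eq_single_of_mem ((false, ⟨m, hmN⟩) : Bool × Fin N) (by simp [toState])]
      · rfl
      · rintro ⟨b, n⟩ hx hne
        simp only [Finset.mem_filter, toState, Prod.mk.injEq] at hx
        exact absurd (by ext <;> simp [hx.2]) hne
    · simp only [Bool.true_eq_false, false_and, Finset.filter_false, Finset.sum_empty,
        mergeHead_true, Finset.sum_const_zero]

end ZetaDiamond

theorem zdia_star_expression_general (N : ℕ) (k : List ℕ)
    (hpos : ∀ x ∈ k, 0 < x) :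
    (∑ l ∈ coarsenings k, zdiaL N l) =
      ∑ A : Finset (Fin k.length),
        if ∀ i ∈ A, k.get i = 1 then
          ∑ n ∈ Finset.univ.filter (fun n : Fin k.length → Fin N =>
            (∀ i, 0 < (n i : ℕ)) ∧
            ∀ (i : Fin k.length) (h : (i : ℕ) + 1 < k.length),
              if i ∉ A ∧ (⟨(i : ℕ) + 1, h⟩ : Fin k.length) ∈ A then
                n i < n ⟨(i : ℕ) + 1, h⟩
              else n i ≤ n ⟨(i : ℕ) + 1, h⟩),
            ∏ i : Fin k.length,
              if i ∈ A then (1 : ℚ) / ((N : ℚ) - ((n i : ℕ) : ℚ))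
              else (1 : ℚ) / (((n i : ℕ) : ℚ) ^ k.get i)
        else 0 := by
  calc ∑ l ∈ coarsenings k, zdiaL N l
      = ZetaDiamond.coarseningSum N k (true, 0) := by
        simp only [ZetaDiamond.coarseningSum, ZetaDiamond.mergeHead_true, add_zero,
          ZetaDiamond.zdiaL_eq_chainSum]
    _ = ZetaDiamond.chainSum N ZetaDiamond.starRel k (true, 0) :=
        (ZetaDiamond.chainSum_starRel_eq_coarseningSum N hpos (Or.inl rfl)).symm
    _ = _ := (ZetaDiamond.sum_eq_chainSum N ZetaDiamond.starRel
        (fun _ => by simp [ZetaDiamond.starRel]) k _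
        fun A n => (ZetaDiamond.isChain_starRel_iff A n).symm).symm

/-- **Expression of the star value.**  For every positive integer `N` and every
admissible index `k`, the diamond star value `ζ◇⋆_N(k) = ∑_{l ⪯ k} ζ◇_N(l)` equals
`∑_{A ⊂ [r]¹_k} ∑_{(n₁,…,n_r) ∈ S⋆_{r,N}(A)} (∏_{i∈A} 1/(N-nᵢ))·(∏_{i∉A} 1/nᵢ^{kᵢ})`,
where `S⋆_{r,N}(A)` consists of tuples in `{1,…,N-1}^r` with `nᵢ ≤ nᵢ₊₁` when
`i ∈ A` or `i+1 ∉ A`, and `nᵢ < nᵢ₊₁` when `i ∉ A` and `i+1 ∈ A`. -/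
theorem zdia_star_expression (N : ℕ) (hN : 0 < N) (k : List ℕ)
    (hpos : ∀ x ∈ k, 0 < x) (hadm : ∃ m, k.getLast? = some m ∧ 2 ≤ m) :
    (∑ l ∈ coarsenings k, zdiaL N l) =
      ∑ A : Finset (Fin k.length),
        if ∀ i ∈ A, k.get i = 1 then
          ∑ n ∈ Finset.univ.filter (fun n : Fin k.length → Fin N =>
            (∀ i, 0 < (n i : ℕ)) ∧
            ∀ (i : Fin k.length) (h : (i : ℕ) + 1 < k.length),
              if i ∉ A ∧ (⟨(i : ℕ) + 1, h⟩ : Fin k.length) ∈ A then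
                n i < n ⟨(i : ℕ) + 1, h⟩
              else n i ≤ n ⟨(i : ℕ) + 1, h⟩),
            ∏ i : Fin k.length,
              if i ∈ A then (1 : ℚ) / ((N : ℚ) - ((n i : ℕ) : ℚ))
              else (1 : ℚ) / (((n i : ℕ) : ℚ) ^ k.get i)
        else 0 :=
  zdia_star_expression_general N k hpos
end

section
/- Let N be a positive integer, n ∈ {0,…,N−1}, and let z be an indeterminate. For p ≥ 0 define ζ^◇_{n,N}({1}^p;z) := Σ_{A⊂{1,…,p}} Σ over tuples (n_1,…,n_{p+1}) of integers in {n+1,…,N} with n_i ≤ n_{i+1} for i ∈ A, n_i < n_{i+1} for i ∈ {1,…,p}\A, and n_{p+1} = N, of (Π_{i∈A} 1/(z−n_i))·(Π_{i∈{1,…,p}\A} 1/n_i), an element of the rational function field ℚ(z), with ζ^◇_{n,N}({1}^0;z) := 1. Then, as an identity of formal power series in t with coefficients in ℚ(z): (Π_{n<j<N} (1 + t/j)) · (Π_{n<j≤N} (1 − t/(z−j)))^{−1} = Σ_{p=0}^∞ ζ^◇_{n,N}({1}^p;z)·t^p. -/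
/-!
Read `ζ◇_{n,N}({1}^p; z)` as a sum over chains `n < n₁, …, n_{p+1} = N` of `p` steps, where a
weak step `x ≤ y` weighs `1/(z-x)` and a strict step `x < y` weighs `1/x`. Sorting the chains by
whether they start at `n+1` (and then by the kind of their first step) or above `n+1` gives
`ζ_n(p+1) = ζ_{n+1}(p+1) + ζ_{n+1}(p)/(n+1) + ζ_n(p)/(z-n-1)`. For the generating series `F_n`
this says `(1 - t/(z-n-1)) F_n = (1 + t/(n+1)) F_{n+1}` when `n+1 < N`, and
`(1 - t/(z-N)) F_{N-1} = 1`; the product formula follows by telescoping.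
-/

open scoped Classical

/-- The value `ζ◇_{n,N}({1}^p; z) ∈ ℚ(z)`: the sum over `A ⊂ {1,…,p}` and tuples
`(n₁,…,n_{p+1})` of integers in `{n+1,…,N}` with `nᵢ ≤ nᵢ₊₁` for `i ∈ A`,
`nᵢ < nᵢ₊₁` for `i ∉ A` and `n_{p+1} = N`, of
`(∏_{i∈A} 1/(z-nᵢ))·(∏_{i∈{1,…,p}∖A} 1/nᵢ)`.  Here `z = RatFunc.X`. -/
noncomputable def zdiaOnes (N n p : ℕ) : RatFunc ℚ :=
  ∑ A : Finset (Fin p),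
    ∑ m ∈ Finset.univ.filter (fun m : Fin (p + 1) → Fin (N + 1) =>
      (∀ i, n < (m i : ℕ)) ∧ ((m (Fin.last p) : ℕ) = N) ∧
      ∀ (i : Fin (p + 1)) (h : (i : ℕ) < p),
        if (⟨(i : ℕ), h⟩ : Fin p) ∈ A then
          (m i : ℕ) ≤ (m ⟨(i : ℕ) + 1, by omega⟩ : ℕ)
        else (m i : ℕ) < (m ⟨(i : ℕ) + 1, by omega⟩ : ℕ)),
      ∏ i : Fin (p + 1),
        if h : (i : ℕ) < p then
          (if (⟨(i : ℕ), h⟩ : Fin p) ∈ A then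
            1 / (RatFunc.X - ((m i : ℕ) : RatFunc ℚ))
          else 1 / ((m i : ℕ) : RatFunc ℚ))
        else 1

open Finset PowerSeries

theorem PowerSeries.one_sub_C_mul_X_mul_mk {R : Type*} [CommRing R] {f g : ℕ → R} {a b : R}
    (h : ∀ p, f (p + 1) = g (p + 1) + b * g p + a * f p) :
    (1 - C a * X) * mk f = C (f 0 - g 0) + (1 + C b * X) * mk g := by
  ext (_ | p)
  · simp
  · simp only [sub_mul, add_mul, one_mul, mul_assoc, map_sub, map_add, coeff_C_mul,
      coeff_succ_X_mul, coeff_mk, coeff_C, Nat.succ_ne_zero, if_false, h]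
    ring

def Equiv.boolFunEquivFinset (α : Type*) [Fintype α] [DecidableEq α] :
    (α → Bool) ≃ Finset α where
  toFun a := univ.filter fun i => a i
  invFun A i := decide (i ∈ A)
  left_inv a := by ext i; simp
  right_inv A := by ext i; simp

abbrev IsChainStep (weak : Bool) (x y : ℕ) : Prop := if weak then x ≤ y else x < y

theorem IsChainStep.le {weak : Bool} {x y : ℕ} (h : IsChainStep weak x y) : x ≤ y := by
  cases weak <;> simp only [IsChainStep, Bool.false_eq_true, if_true, if_false] at h <;> omega

section ChainSums

variable {R : Type*} [CommSemiring R] (u v : ℕ → R)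

def stepWeight (weak : Bool) (x y : ℕ) : R :=
  if IsChainStep weak x y then (if weak then u x else v x) else 0

def chainSumFrom (N p : ℕ) : (ℕ → R) →ₗ[R] R :=
  ∑ a : Fin p → Bool, ∑ m : Fin (p + 1) → Fin (N + 1),
    (if (m (Fin.last p) : ℕ) = N then ∏ i, stepWeight u v (a i) (m i.castSucc) (m i.succ)
      else 0) • LinearMap.proj (m 0 : ℕ)

theorem chainSumFrom_apply (N p : ℕ) (f : ℕ → R) :
    chainSumFrom u v N p f = ∑ a : Fin p → Bool, ∑ m : Fin (p + 1) → Fin (N + 1),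
      if (m (Fin.last p) : ℕ) = N then
        (∏ i, stepWeight u v (a i) (m i.castSucc) (m i.succ)) * f (m 0) else 0 := by
  simp only [chainSumFrom, LinearMap.sum_apply]
  refine Finset.sum_congr rfl fun a _ => Finset.sum_congr rfl fun m _ => ?_
  split_ifs <;> simp [mul_comm]

def stepTransfer (N : ℕ) (f : ℕ → R) (y : ℕ) : R :=
  ∑ b : Bool, ∑ x : Fin (N + 1), stepWeight u v b x y * f x

theorem chainSumFrom_succ (N p : ℕ) (f : ℕ → R) :
    chainSumFrom u v N (p + 1) f = chainSumFrom u v N p (stepTransfer u v N f) := by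
  simp only [chainSumFrom_apply, stepTransfer, Finset.mul_sum, Finset.ite_sum_zero]
  rw [← (Fin.consEquiv fun _ => Bool).sum_comp, Fintype.sum_prod_type, Finset.sum_comm]
  refine Finset.sum_congr rfl fun a _ => ?_
  simp only [← (Fin.consEquiv fun _ : Fin (p + 1 + 1) => Fin (N + 1)).sum_comp,
    Fintype.sum_prod_type]
  rw [Finset.sum_comm_cycle]
  simp only [Fin.consEquiv, Equiv.coe_fn_mk, Fin.prod_univ_succ, ← Fin.succ_last,
    ← Fin.succ_castSucc, Fin.castSucc_zero, Fin.cons_zero, Fin.cons_succ]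
  ac_rfl

def chainSum (N n p : ℕ) : R :=
  chainSumFrom u v N p fun x => if n < x then 1 else 0

theorem stepTransfer_indicator_apply (N n y : ℕ) :
    stepTransfer u v N (fun x => if n < x then 1 else 0) y =
      ∑ b : Bool, ∑ x ∈ Ioc n N, stepWeight u v b x y := by
  refine Fintype.sum_congr _ _ fun b => ?_
  rw [Fin.sum_univ_eq_sum_range (fun x => stepWeight u v b x y * if n < x then 1 else 0)]
  simp only [mul_ite, mul_one, mul_zero, ← Finset.sum_filter]
  congr 1
  ext x
  simp only [mem_filter, mem_range, mem_Ioc]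
  omega

theorem stepTransfer_indicator {N n : ℕ} (hn : n < N) :
    stepTransfer u v N (fun x => if n < x then 1 else 0) =
      stepTransfer u v N (fun x => if n + 1 < x then 1 else 0) +
        v (n + 1) • (fun x => if n + 1 < x then 1 else 0) +
        u (n + 1) • (fun x => if n < x then 1 else 0) := by
  ext y
  simp only [Pi.add_apply, Pi.smul_apply, smul_eq_mul, stepTransfer_indicator_apply,
    ← insert_Ioc_add_one_left_eq_Ioc hn, sum_insert left_notMem_Ioc, Fintype.sum_bool,
    stepWeight, IsChainStep, if_true, Bool.false_eq_true, if_false, Nat.add_one_le_iff,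
    mul_ite, mul_one, mul_zero]
  ring

theorem chainSum_succ {N n : ℕ} (hn : n < N) (p : ℕ) :
    chainSum u v N n (p + 1) =
      chainSum u v N (n + 1) (p + 1) + v (n + 1) * chainSum u v N (n + 1) p +
        u (n + 1) * chainSum u v N n p := by
  simp only [chainSum, chainSumFrom_succ, stepTransfer_indicator u v hn, map_add, map_smul,
    smul_eq_mul]

theorem chainSum_zero (N n : ℕ) : chainSum u v N n 0 = if n < N then 1 else 0 := by
  rw [chainSum, chainSumFrom_apply, Fintype.sum_unique,
    ← (Equiv.funUnique (Fin 1) (Fin (N + 1))).symm.sum_comp, Fintype.sum_eq_single (Fin.last N)]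
  · simp
  · intro x hx
    rw [if_neg fun h => hx (Fin.ext (by simpa using h))]

theorem chainSum_self (N p : ℕ) : chainSum u v N N p = 0 := by
  simp [chainSum, chainSumFrom_apply, not_lt.mpr (Fin.is_le _)]

end ChainSums

theorem mk_chainSum_mul_prod {R : Type*} [CommRing R] (u v : ℕ → R) (n k : ℕ) :
    mk (chainSum u v (n + 1 + k) n) * ∏ j ∈ Ioc n (n + 1 + k), (1 - C (u j) * X) =
      ∏ j ∈ Ioo n (n + 1 + k), (1 + C (v j) * X) := by
  induction k generalizing n with
  | zero =>
    have hrec := one_sub_C_mul_X_mul_mk (chainSum_succ u v (Nat.lt_add_one n))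
    have hzero : mk (chainSum u v (n + 1) (n + 1)) = 0 := by ext; simp [chainSum_self]
    rw [hzero, mul_zero, add_zero, chainSum_zero, chainSum_self, if_pos (Nat.lt_add_one n),
      sub_zero, map_one] at hrec
    rw [add_zero, Nat.Ioc_succ_singleton, prod_singleton, mul_comm, hrec,
      Ioo_add_one_right_eq_Ioc, Ioc_self, prod_empty]
  | succ k ih =>
    have hrec := one_sub_C_mul_X_mul_mk (chainSum_succ u v (by omega : n < n + 1 + 1 + k))
    rw [chainSum_zero, chainSum_zero, if_pos (by omega), if_pos (by omega), sub_self, map_zero,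
      zero_add] at hrec
    rw [show n + 1 + (k + 1) = n + 1 + 1 + k by omega,
      ← insert_Ioc_add_one_left_eq_Ioc (by omega), prod_insert left_notMem_Ioc,
      ← Ico_add_one_left_eq_Ioo, ← Ioo_insert_left (by omega), prod_insert left_notMem_Ioo, ← ih]
    linear_combination (∏ j ∈ Ioc (n + 1) (n + 1 + 1 + k), (1 - C (u j) * X)) * hrec

theorem zdiaOnes_eq_chainSum (N n p : ℕ) :
    zdiaOnes N n p =
      chainSum (fun x => (RatFunc.X - (x : RatFunc ℚ))⁻¹) (fun x => (x : RatFunc ℚ)⁻¹) N n p := by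
  rw [zdiaOnes, chainSum, chainSumFrom_apply, ← (Equiv.boolFunEquivFinset (Fin p)).sum_comp]
  refine Fintype.sum_congr _ _ fun a => ?_
  rw [Finset.sum_filter]
  refine Fintype.sum_congr _ _ fun m => ?_
  have hsucc (i : Fin p) (h : (i : ℕ) + 1 < p + 1) : (⟨(i : ℕ) + 1, h⟩ : Fin (p + 1)) = i.succ :=
    rfl
  simp only [Equiv.boolFunEquivFinset, Equiv.coe_fn_mk, mem_filter, mem_univ, true_and,
    Fin.forall_fin_succ' (P := fun i : Fin (p + 1) => ∀ h : (i : ℕ) < p, _),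
    Fin.prod_univ_castSucc, Fin.val_castSucc, Fin.val_last, lt_irrefl, Fin.eta, hsucc, Fin.is_lt,
    forall_true_left, IsEmpty.forall_iff, and_true, dif_pos, dite_false, mul_one, one_div,
    stepWeight, Fintype.prod_ite_zero]
  by_cases hS : ∀ i : Fin p, IsChainStep (a i) (m i.castSucc) (m i.succ)
  · have hmono : Monotone fun i => (m i : ℕ) :=
      Fin.monotone_iff_le_succ.mpr fun i => (hS i).le
    have hpos : (∀ i, n < (m i : ℕ)) ↔ n < m 0 :=
      ⟨fun h => h 0, fun h i => h.trans_le (hmono (Fin.zero_le i))⟩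
    simp only [hpos, hS, mul_ite, mul_one, mul_zero, ite_and]
    split_ifs <;> rfl
  · simp only [hS, and_false, if_false, zero_mul, ite_self]

theorem ones_generating_series_general (N : ℕ) (n : ℕ) (hn : n < N) :
    (∏ j ∈ Finset.Ioo n N,
        (1 + PowerSeries.C (R := RatFunc ℚ) (((j : ℕ) : RatFunc ℚ))⁻¹ * PowerSeries.X)) *
      (∏ j ∈ Finset.Ioc n N,
        (1 - PowerSeries.C (R := RatFunc ℚ)
            ((RatFunc.X - ((j : ℕ) : RatFunc ℚ))⁻¹) * PowerSeries.X))⁻¹ =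
    PowerSeries.mk (fun p => zdiaOnes N n p) := by
  obtain ⟨k, rfl⟩ : ∃ k, N = n + 1 + k := ⟨N - (n + 1), by omega⟩
  have hunit : constantCoeff (∏ j ∈ Ioc n (n + 1 + k),
      (1 - C ((RatFunc.X - (j : RatFunc ℚ))⁻¹) * X)) ≠ 0 := by
    simp [map_prod]
  rw [← (eq_mul_inv_iff_mul_eq hunit).mpr (mk_chainSum_mul_prod _ _ n k)]
  exact congrArg mk (funext fun p => (zdiaOnes_eq_chainSum _ n p).symm)

/-- **Generating series of `ζ◇_{n,N}({1}^p; z)`.**  For `0 ≤ n ≤ N-1`, as an identity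
of formal power series in `t` over the field `ℚ(z)`:
`(∏_{n<j<N} (1+t/j)) · (∏_{n<j≤N} (1-t/(z-j)))⁻¹ = ∑_{p≥0} ζ◇_{n,N}({1}^p;z) t^p`. -/
theorem ones_generating_series (N : ℕ) (hNpos : 0 < N) (n : ℕ) (hn : n < N) :
    (∏ j ∈ Finset.Ioo n N,
        (1 + PowerSeries.C (R := RatFunc ℚ) (((j : ℕ) : RatFunc ℚ))⁻¹ * PowerSeries.X)) *
      (∏ j ∈ Finset.Ioc n N,
        (1 - PowerSeries.C (R := RatFunc ℚ)
            ((RatFunc.X - ((j : ℕ) : RatFunc ℚ))⁻¹) * PowerSeries.X))⁻¹ =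
    PowerSeries.mk (fun p => zdiaOnes N n p) :=
  ones_generating_series_general N n hn
end
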